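/- Let f(t) = a₀t^{p^e} + a₁t^{p^{e−1}} + ⋯ + a_e t + d ∈ D[t;δ] be a monic p-polynomial of degree p^e ≥ 2. Then: (i) for every a ∈ C, S_f ≅ S_h as F-algebras, where h(t) = f(t) − V_f(a); (ii) for every a ∈ C with V_f(a) = 0, the map G_{id,−a} is an F-algebra automorphism of S_f. -/

import Mathlib

open Finsupp

section Defs

variable {D R : Type*}

/-- `δ` is a derivation on the (possibly noncommutative) ring `D`. -/
def IsDeriv [Ring D] (δ : D → D) : Prop :=
  (∀ a b, δ (a + b) = δ a + δ b) ∧ ∀ a b, δ (a * b) = a * δ b + δ a * b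

/-- `(R, i, t, coeff)` realizes the differential polynomial ring `D[t;δ]`:
`t * a = a * t + δ a` for `a ∈ D`, and every element of `R` is uniquely of
the form `∑ aₙ tⁿ`, the `aₙ` being recorded by the additive equivalence `coeff`. -/
def IsDiffPolyRing [Ring D] [Ring R] (δ : D → D) (i : D →+* R) (t : R)
    (coeff : R ≃+ (ℕ →₀ D)) : Prop :=
  (∀ a : D, t * i a = i a * t + i (δ a)) ∧
    ∀ (n : ℕ) (a : D), coeff.symm (Finsupp.single n a) = i a * t ^ n

/-- `r` has degree `< m`. -/
def DegLt [Ring D] [Ring R] (coeff : R ≃+ (ℕ →₀ D)) (m : ℕ) (r : R) : Prop :=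
  ∀ n, m ≤ n → coeff r n = 0

/-- `f` is monic of degree `m`. -/
def MonicDeg [Ring D] [Ring R] (coeff : R ≃+ (ℕ →₀ D)) (m : ℕ) (f : R) : Prop :=
  coeff f m = 1 ∧ ∀ n, m < n → coeff f n = 0

/-- The carrier of the Petit algebra `S_f`: all polynomials of degree `< m`. -/
def SfSet [Ring D] [Ring R] (coeff : R ≃+ (ℕ →₀ D)) (m : ℕ) : Set R :=
  {r | DegLt coeff m r}

/-- `mul` is the Petit multiplication: `mul x y = x·y mod_r f`, i.e. `mul x y`
has degree `< m` and differs from `x·y` by a left multiple of `f`. -/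
def IsPetitMul [Ring D] [Ring R] (coeff : R ≃+ (ℕ →₀ D)) (f : R) (m : ℕ)
    (mul : R → R → R) : Prop :=
  ∀ x y : R, DegLt coeff m (mul x y) ∧ ∃ q : R, x * y = q * f + mul x y

/-- `f` is right semi-invariant: `f·a ∈ D·f` for all `a ∈ D`. -/
def RightSemiInvariant [Ring D] [Ring R] (i : D →+* R) (f : R) : Prop :=
  ∀ a : D, ∃ b : D, f * i a = i b * f

/-- `f` is two-sided (invariant): the left ideal `Rf` is a two-sided ideal. -/
def TwoSidedElem [Ring R] (f : R) : Prop :=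
  ∀ r : R, ∃ q : R, f * r = q * f

/-- `f` (of degree `m`) is irreducible: it has no factorization into factors
of degree `< m`. -/
def IrredDeg [Ring D] [Ring R] (coeff : R ≃+ (ℕ →₀ D)) (m : ℕ) (f : R) : Prop :=
  ¬∃ g h : R, f = g * h ∧ DegLt coeff m g ∧ DegLt coeff m h

/-- `f` (of degree `m`) is irreducible as a polynomial with coefficients in
the subfield `Fset` of `D`. -/
def IrredOver [Ring D] [Ring R] (coeff : R ≃+ (ℕ →₀ D)) (Fset : Set D) (m : ℕ)
    (f : R) : Prop :=
  ¬∃ g h : R, f = g * h ∧ DegLt coeff m g ∧ DegLt coeff m h ∧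
    (∀ n, coeff g n ∈ Fset) ∧ ∀ n, coeff h n ∈ Fset

/-- Left nucleus of the algebra `(S, mul)`. -/
def LeftNuc [Ring R] (S : Set R) (mul : R → R → R) : Set R :=
  {x ∈ S | ∀ y ∈ S, ∀ z ∈ S, mul (mul x y) z = mul x (mul y z)}

/-- Middle nucleus of the algebra `(S, mul)`. -/
def MidNuc [Ring R] (S : Set R) (mul : R → R → R) : Set R :=
  {x ∈ S | ∀ y ∈ S, ∀ z ∈ S, mul (mul y x) z = mul y (mul x z)}

/-- Right nucleus of the algebra `(S, mul)`. -/
def RightNuc [Ring R] (S : Set R) (mul : R → R → R) : Set R :=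
  {x ∈ S | ∀ y ∈ S, ∀ z ∈ S, mul (mul y z) x = mul y (mul z x)}

/-- `(S, mul)` is a division algebra: all nonzero left and right
multiplications are bijective. -/
def IsDivAlg [Ring R] (S : Set R) (mul : R → R → R) : Prop :=
  ∀ x ∈ S, x ≠ 0 → Set.BijOn (mul x) S S ∧ Set.BijOn (fun y => mul y x) S S

/-- `(S, mul)` is associative. -/
def IsAssocOn [Ring R] (S : Set R) (mul : R → R → R) : Prop :=
  ∀ x ∈ S, ∀ y ∈ S, ∀ z ∈ S, mul (mul x y) z = mul x (mul y z)

/-- The constants of `δ`. -/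
def ConstSet [Ring D] (δ : D → D) : Set D := {a | δ a = 0}

/-- The center of `D`. -/
def CenterSet (D : Type*) [Ring D] : Set D := {a | ∀ b, a * b = b * a}

/-- `F₀ = Const(δ) ∩ C(D)`. -/
def F0Set [Ring D] (δ : D → D) : Set D := ConstSet δ ∩ CenterSet D

/-- The elements of the Petit algebra all of whose coefficients lie in `Fset`,
e.g. `Fset ⊕ Fset·t ⊕ ⋯ ⊕ Fset·t^{m-1}`. -/
def SubCoeffSet [Ring D] [Ring R] (coeff : R ≃+ (ℕ →₀ D)) (m : ℕ)
    (Fset : Set D) : Set R :=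
  {r | DegLt coeff m r ∧ ∀ n, coeff r n ∈ Fset}

/-- `S ⊆ R` has dimension `k` over the subfield `Fset ⊆ D` (acting through `i`):
there is an `Fset`-basis of size `k`. -/
def HasDim [Ring D] [Ring R] (Fset : Set D) (i : D →+* R) (S : Set R) (k : ℕ) : Prop :=
  ∃ b : Fin k → R, (∀ j, b j ∈ S) ∧
    ∀ x ∈ S, ∃! c : Fin k → D, (∀ j, c j ∈ Fset) ∧ x = ∑ j, i (c j) * b j

/-- `S ⊆ D` has dimension `k` over the subfield `Fset ⊆ D`. -/
def HasDimIn [Ring D] (Fset : Set D) (S : Set D) (k : ℕ) : Prop :=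
  ∃ b : Fin k → D, (∀ j, b j ∈ S) ∧
    ∀ x ∈ S, ∃! c : Fin k → D, (∀ j, c j ∈ Fset) ∧ x = ∑ j, c j * b j

/-- Substitution of `x` for `t` in `r = ∑ aₙ tⁿ`. -/
noncomputable def substT [Ring D] [Ring R] (coeff : R ≃+ (ℕ →₀ D)) (i : D →+* R) (r x : R) : R :=
  (coeff r).sum fun n c => i c * x ^ n

/-- `V_f(b)`: the constant `f(t) − f(t−b)`. -/
noncomputable def Vf [Ring D] [Ring R] (coeff : R ≃+ (ℕ →₀ D)) (i : D →+* R) (t f : R) (b : D) : D :=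
  coeff (f - substT coeff i f (t - i b)) 0

/-- `V_p(b)`: the constant with `(t−b)^p = t^p − V_p(b)`. -/
noncomputable def Vp [Ring D] [Ring R] (coeff : R ≃+ (ℕ →₀ D)) (i : D →+* R) (t : R) (p : ℕ)
    (b : D) : D :=
  coeff (t ^ p - (t - i b) ^ p) 0

/-- For commutative coefficients, `V_p(b) = b^p + δ^{p−1}(b)`. -/
def VpFun [Ring D] (δ : D → D) (p : ℕ) : D → D := fun b => b ^ p + δ^[p - 1] b

/-- `V(a) = V_{p^e}(a) + c₁ V_{p^{e−1}}(a) + ⋯ + c_e a`, computed with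
`V_p(b) = b^p + δ^{p−1}(b)` (commutative case). -/
def Vg [Ring D] (δ : D → D) (p e : ℕ) (c : Fin e → D) : D → D :=
  fun a => (VpFun δ p)^[e] a + ∑ j : Fin e, c j * (VpFun δ p)^[e - 1 - (j : ℕ)] a

/-- `V(a) = V_{p^e}(a) + c₁ V_{p^{e−1}}(a) + ⋯ + c_e a`, with `V_p` defined by
the identity `(t−b)^p = t^p − V_p(b)` in `D[t;δ]`. -/
noncomputable def VgR [Ring D] [Ring R] (coeff : R ≃+ (ℕ →₀ D)) (i : D →+* R) (t : R) (p e : ℕ)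
    (c : Fin e → D) : D → D :=
  fun a => (Vp coeff i t p)^[e] a + ∑ j : Fin e, c j * (Vp coeff i t p)^[e - 1 - (j : ℕ)] a

/-- The map `G_{id,−a}` sending `∑ bₙ tⁿ` to `∑ bₙ (t−a)ⁿ`. -/
noncomputable def Gmap [Ring D] [Ring R] (coeff : R ≃+ (ℕ →₀ D)) (i : D →+* R) (t : R) (a : D) :
    R → R :=
  fun r => substT coeff i r (t - i a)

/-- `H` is an isomorphism of `Fset`-algebras from `(S, mul)` onto `(S', mul')`. -/
def IsAlgIso [Ring D] [Ring R] (Fset : Set D) (i : D →+* R) (S S' : Set R)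
    (mul mul' : R → R → R) (H : R → R) : Prop :=
  Set.BijOn H S S' ∧ (∀ x ∈ S, ∀ y ∈ S, H (x + y) = H x + H y) ∧
    (∀ x ∈ S, ∀ y ∈ S, H (mul x y) = mul' (H x) (H y)) ∧ H 1 = 1 ∧
    ∀ a ∈ Fset, ∀ x ∈ S, H (i a * x) = i a * H x

/-- `H` is an `Fset`-algebra automorphism of the Petit algebra `(S, mul)`. -/
def IsAut [Ring D] [Ring R] (Fset : Set D) (i : D →+* R) (S : Set R)
    (mul : R → R → R) (H : R → R) : Prop :=
  IsAlgIso Fset i S S mul mul H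

/-- The operator `δ^{p^e} + c₁ δ^{p^{e−1}} + ⋯ + c_e δ` vanishes on `Cset`,
i.e. the `p`-polynomial `t^{p^e} + c₁ t^{p^{e−1}} + ⋯ + c_e t` annihilates `δ|_{Cset}`. -/
def PPolyAnnOn [Ring D] (δ : D → D) (Cset : Set D) (p e : ℕ) (c : Fin e → D) : Prop :=
  ∀ a ∈ Cset, δ^[p ^ e] a + ∑ j : Fin e, c j * δ^[p ^ (e - 1 - (j : ℕ))] a = 0

/-- `t^{p^e} + c₁ t^{p^{e−1}} + ⋯ + c_e t` (coefficients in `Fset`) is the minimum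
`p`-polynomial of `δ` restricted to `Cset`. -/
def IsMinPPoly [Ring D] (δ : D → D) (Cset Fset : Set D) (p e : ℕ)
    (c : Fin e → D) : Prop :=
  (∀ j, c j ∈ Fset) ∧ PPolyAnnOn δ Cset p e c ∧
    ∀ e' : ℕ, e' < e → ∀ c' : Fin e' → D, (∀ j, c' j ∈ Fset) →
      ¬PPolyAnnOn δ Cset p e' c'

/-- The natural map from `D[X]` to `R`, `∑ aₙ Xⁿ ↦ ∑ aₙ tⁿ`. -/
noncomputable def polyToR [Ring D] [Ring R] (i : D →+* R) (t : R) (q : Polynomial D) : R :=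
  q.sum fun n a => i a * t ^ n

/-- The element `f ∈ R` rewritten as an ordinary polynomial in `D[X]`. -/
noncomputable def coeffPoly [Ring D] [Ring R] (coeff : R ≃+ (ℕ →₀ D)) (f : R) : Polynomial D :=
  (coeff f).sum fun n a => Polynomial.C a * Polynomial.X ^ n

/-- The set `T = Fset ⊕ Fset·t ⊕ ⋯ ⊕ Fset·t^{m−1} ⊆ S_f` is isomorphic, as a
ring, to the quotient `Fset[X]/(f)`: the natural map `θ : ∑ aₙ Xⁿ ↦ ∑ aₙ tⁿ`,
from polynomials over `Fset` of degree `< m` with multiplication given by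
reduction mod `f`, is a bijection onto `T` respecting all the operations. -/
def IsPolyQuotIso [Ring D] [Ring R] (Fset : Set D) (i : D →+* R)
    (coeff : R ≃+ (ℕ →₀ D)) (t f : R) (m : ℕ) (mul : R → R → R) (T : Set R) : Prop :=
  Set.BijOn (polyToR i t)
    {q : Polynomial D | (∀ n, q.coeff n ∈ Fset) ∧ q.degree < (m : WithBot ℕ)} T ∧
  (∀ q q' : Polynomial D, polyToR i t (q + q') = polyToR i t q + polyToR i t q') ∧
  polyToR i t 1 = 1 ∧
  ∀ q ∈ {q : Polynomial D | (∀ n, q.coeff n ∈ Fset) ∧ q.degree < (m : WithBot ℕ)},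
    ∀ q' ∈ {q : Polynomial D | (∀ n, q.coeff n ∈ Fset) ∧ q.degree < (m : WithBot ℕ)},
      ∃ s r : Polynomial D, q * q' = s * coeffPoly coeff f + r ∧
        r.degree < (m : WithBot ℕ) ∧
        polyToR i t r = mul (polyToR i t q) (polyToR i t q')

end Defs

/-!
For central `a`, the element `t - a` obeys the same rule `(t - a) c = c (t - a) + δ c` as `t`, so
`t ↦ t - a` extends to a ring automorphism `G` of `D[t;δ]` fixing `D` and preserving degrees.
Writing `T x = δ x - a x`, one has `(t - a)ⁿ = ∑ₖ (n choose k) T^{n-k}(1) tᵏ`; for `n = p^k` all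
middle binomial coefficients vanish in characteristic `p`, so `(t - a)^{p^k}` is `t^{p^k}` plus a
constant and `G f = f - V_f(a)`. Since `G` maps `x = q f + r` to `G x = G q · h + G r` with
`h = f - V_f(a)` monic of degree `p^e`, uniqueness of remainders modulo a monic polynomial makes
`G` an isomorphism `S_f ≅ S_h`.
-/

section

variable {D R : Type*} [Ring D] [Ring R] {δ : D → D} {i : D →+* R} {t : R}
  {coeff : R ≃+ (ℕ →₀ D)}

lemma IsDeriv.map_zero (hδ : IsDeriv δ) : δ 0 = 0 := by
  simpa using hδ.1 0 0

lemma neg_mem_centerSet {b : D} (hb : b ∈ CenterSet D) : -b ∈ CenterSet D := fun y => by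
  rw [neg_mul, mul_neg, hb y]

lemma Gmap_zero (b : D) : Gmap coeff i t b 0 = 0 := by
  simp [Gmap, substT]

lemma Gmap_add (b : D) (x y : R) :
    Gmap coeff i t b (x + y) = Gmap coeff i t b x + Gmap coeff i t b y := by
  unfold Gmap substT
  rw [map_add coeff x y]
  exact Finsupp.sum_add_index' (fun n => by rw [map_zero, zero_mul])
    (fun n c₁ c₂ => by rw [map_add, add_mul])

def pPoly (i : D →+* R) (t : R) (p : ℕ) {e : ℕ} (a : Fin e → D) (d : D) : R :=
  t ^ p ^ e + (∑ j : Fin e, i (a j) * t ^ p ^ (e - 1 - (j : ℕ))) + i d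

namespace IsDiffPolyRing

lemma coeff_monomial (hR : IsDiffPolyRing δ i t coeff) (n : ℕ) (a : D) :
    coeff (i a * t ^ n) = Finsupp.single n a := by
  rw [← hR.2 n a, AddEquiv.apply_symm_apply]

lemma coeff_C (hR : IsDiffPolyRing δ i t coeff) (c : D) : coeff (i c) = Finsupp.single 0 c := by
  rw [← hR.coeff_monomial 0 c, pow_zero, mul_one]

lemma coeff_t_pow (hR : IsDiffPolyRing δ i t coeff) (n : ℕ) :
    coeff (t ^ n) = Finsupp.single n (1 : D) := by
  rw [← hR.coeff_monomial n 1, map_one, one_mul]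

lemma eq_sum_monomial (hR : IsDiffPolyRing δ i t coeff) (x : R) :
    x = (coeff x).sum fun n a => i a * t ^ n := by
  calc x = coeff.symm ((coeff x).sum Finsupp.single) := by
        rw [Finsupp.sum_single, AddEquiv.symm_apply_apply]
    _ = (coeff x).sum fun n a => i a * t ^ n := by
        rw [map_finsuppSum]
        exact Finsupp.sum_congr fun n _ => hR.2 n _

lemma induction_on (hR : IsDiffPolyRing δ i t coeff) {P : R → Prop} (zero : P 0)
    (add : ∀ x y, P x → P y → P (x + y)) (monomial : ∀ (n : ℕ) (a : D), P (i a * t ^ n))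
    (x : R) : P x := by
  rw [hR.eq_sum_monomial x]
  exact Finset.sum_induction _ P add zero fun n _ => monomial n _

lemma coeff_C_mul (hR : IsDiffPolyRing δ i t coeff) (a : D) (z : R) (k : ℕ) :
    coeff (i a * z) k = a * coeff z k := by
  induction z using hR.induction_on with
  | zero => simp
  | add x y hx hy => simp only [mul_add, map_add, Finsupp.add_apply, hx, hy]
  | monomial n c =>
    rw [← mul_assoc, ← map_mul, hR.coeff_monomial, hR.coeff_monomial, Finsupp.single_apply,
      Finsupp.single_apply]
    split_ifs <;> simp

lemma coeff_t_mul_succ (hR : IsDiffPolyRing δ i t coeff) (hδ : IsDeriv δ) (z : R) (k : ℕ) :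
    coeff (t * z) (k + 1) = coeff z k + δ (coeff z (k + 1)) := by
  induction z using hR.induction_on with
  | zero => simp [hδ.map_zero]
  | add x y hx hy =>
    simp only [mul_add, map_add, Finsupp.add_apply, hx, hy, hδ.1]
    abel
  | monomial n c =>
    rw [← mul_assoc, hR.1, add_mul, mul_assoc, ← pow_succ', map_add coeff, hR.coeff_monomial,
      hR.coeff_monomial, hR.coeff_monomial]
    simp only [Finsupp.add_apply, Finsupp.single_apply, Nat.add_right_cancel_iff]
    split_ifs <;> simp_all [hδ.map_zero]

lemma coeff_t_pow_mul (hR : IsDiffPolyRing δ i t coeff) (hδ : IsDeriv δ) (n : ℕ) {z : R}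
    {N : ℕ} (hz : DegLt coeff (N + 1) z) :
    coeff (t ^ n * z) (N + n) = coeff z N ∧ DegLt coeff (N + n + 1) (t ^ n * z) := by
  induction n with
  | zero => simpa using hz
  | succ n ih =>
    obtain ⟨ih_top, ih_deg⟩ := ih
    rw [pow_succ', mul_assoc]
    refine ⟨?_, fun k hk => ?_⟩
    · rw [← add_assoc, hR.coeff_t_mul_succ hδ, ih_top, ih_deg _ le_rfl, hδ.map_zero, add_zero]
    · obtain ⟨k, rfl⟩ : ∃ k', k = k' + 1 := ⟨k - 1, by omega⟩
      rw [hR.coeff_t_mul_succ hδ, ih_deg k (by omega), ih_deg (k + 1) (by omega), hδ.map_zero,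
        add_zero]

lemma coeff_mul_of_monicDeg (hR : IsDiffPolyRing δ i t coeff) (hδ : IsDeriv δ) {h : R} {m : ℕ}
    (hh : MonicDeg coeff m h) {q : R} {N : ℕ} (hq : DegLt coeff (N + 1) q) :
    coeff (q * h) (N + m) = coeff q N := by
  have hdeg : DegLt coeff (m + 1) h := fun k hk => hh.2 k hk
  conv_lhs => rw [hR.eq_sum_monomial q, Finsupp.sum_mul]
  simp only [mul_assoc, map_finsuppSum, Finsupp.sum_apply, hR.coeff_C_mul]
  rw [Finsupp.sum, Finset.sum_eq_single N]
  · rw [add_comm, (hR.coeff_t_pow_mul hδ N hdeg).1, hh.1, mul_one]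
  · intro n hn hnN
    have hnN : n < N := lt_of_le_of_ne
      (not_lt.mp fun h => Finsupp.mem_support_iff.mp hn (hq n h)) hnN
    rw [(hR.coeff_t_pow_mul hδ n hdeg).2 _ (by omega), mul_zero]
  · intro hN
    rw [Finsupp.notMem_support_iff.mp hN, zero_mul]

lemma mul_eq_zero_of_degLt (hR : IsDiffPolyRing δ i t coeff) (hδ : IsDeriv δ) {h : R} {m : ℕ}
    (hh : MonicDeg coeff m h) {q : R} (hqh : DegLt coeff m (q * h)) : q * h = 0 := by
  rcases eq_or_ne (coeff q) 0 with hq | hq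
  · rw [show q = 0 by simpa using hq, zero_mul]
  have hne := Finsupp.support_nonempty_iff.mpr hq
  have hdeg : DegLt coeff ((coeff q).support.max' hne + 1) q := fun k hk =>
    Finsupp.notMem_support_iff.mp fun hk' => by
      have := (coeff q).support.le_max' k hk'
      omega
  have htop := hR.coeff_mul_of_monicDeg hδ hh hdeg
  rw [hqh _ (Nat.le_add_left m _)] at htop
  exact absurd htop.symm (Finsupp.mem_support_iff.mp ((coeff q).support.max'_mem hne))

lemma remainder_unique (hR : IsDiffPolyRing δ i t coeff) (hδ : IsDeriv δ) {h : R} {m : ℕ}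
    (hh : MonicDeg coeff m h) {q q' r r' : R} (hr : DegLt coeff m r) (hr' : DegLt coeff m r')
    (heq : q * h + r = q' * h + r') : r = r' := by
  have hdiff : (q - q') * h = r' - r := by
    rw [sub_mul, sub_eq_sub_iff_add_eq_add, heq, add_comm]
  have hdeg : DegLt coeff m ((q - q') * h) := fun k hk => by
    rw [hdiff, map_sub, Finsupp.sub_apply, hr' k hk, hr k hk, sub_zero]
  rw [hR.mul_eq_zero_of_degLt hδ hh hdeg, eq_comm, sub_eq_zero] at hdiff
  exact hdiff.symm

lemma sub_C_mul_monomial (hR : IsDiffPolyRing δ i t coeff) (b : D) (k : ℕ) (a : D) :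
    (t - i b) * (i a * t ^ k) = i a * t ^ (k + 1) + i (δ a - b * a) * t ^ k := by
  rw [sub_mul, ← mul_assoc, hR.1, ← mul_assoc, ← map_mul, map_sub, add_mul, mul_assoc,
    ← pow_succ', sub_mul, add_sub_assoc]

lemma sub_C_pow (hR : IsDiffPolyRing δ i t coeff) (b : D) (n : ℕ) :
    (t - i b) ^ n = ∑ k ∈ Finset.range (n + 1),
      n.choose k • (i ((fun x => δ x - b * x)^[n - k] 1) * t ^ k) := by
  induction n with
  | zero => simp
  | succ n ih =>
    rw [pow_succ', ih, Finset.mul_sum,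
      Finset.sum_choose_succ_nsmul (fun k j => i ((fun x => δ x - b * x)^[j] 1) * t ^ k),
      ← Finset.sum_add_distrib]
    refine Finset.sum_congr rfl fun k hk => ?_
    have hkn : n + 1 - k = n - k + 1 := by have := Finset.mem_range.mp hk; omega
    rw [mul_smul_comm, hR.sub_C_mul_monomial, smul_add, add_comm, hkn,
      Function.iterate_succ_apply']

lemma sub_C_pow_prime_pow (hR : IsDiffPolyRing δ i t coeff) {p : ℕ} (hp : p.Prime) [CharP D p]
    (b : D) (k : ℕ) :
    (t - i b) ^ p ^ k = t ^ p ^ k + i ((fun x => δ x - b * x)^[p ^ k] 1) := by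
  rw [hR.sub_C_pow, Finset.sum_range_succ, Finset.sum_eq_single_of_mem 0
    (Finset.mem_range.mpr (Nat.pow_pos hp.pos))]
  · simp [add_comm]
  · intro j hj hj0
    have hchoose : ((p ^ k).choose j : D) = 0 := (CharP.cast_eq_zero_iff D p _).mpr
      (hp.dvd_choose_pow hj0 (Finset.mem_range.mp hj).ne)
    rw [nsmul_eq_mul, ← map_natCast i, hchoose, map_zero, zero_mul]

lemma coeff_sub_C_pow_of_lt (hR : IsDiffPolyRing δ i t coeff) (b : D) {n k : ℕ} (hk : n < k) :
    coeff ((t - i b) ^ n) k = 0 := by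
  rw [hR.sub_C_pow, map_sum, Finset.sum_apply']
  refine Finset.sum_eq_zero fun j hj => ?_
  have hkj : k ≠ j := by have := Finset.mem_range.mp hj; omega
  rw [map_nsmul, Finsupp.smul_apply, hR.coeff_monomial, Finsupp.single_eq_of_ne hkj, smul_zero]

lemma sub_C_mul_C (hR : IsDiffPolyRing δ i t coeff) {b : D} (hb : b ∈ CenterSet D) (c : D) :
    (t - i b) * i c = i c * (t - i b) + i (δ c) := by
  rw [sub_mul, hR.1, mul_sub, ← map_mul, ← map_mul, hb c]
  abel

lemma Gmap_monomial (hR : IsDiffPolyRing δ i t coeff) (b : D) (n : ℕ) (a : D) :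
    Gmap coeff i t b (i a * t ^ n) = i a * (t - i b) ^ n := by
  rw [Gmap, substT, hR.coeff_monomial, Finsupp.sum_single_index (by rw [map_zero, zero_mul])]

lemma Gmap_C_mul (hR : IsDiffPolyRing δ i t coeff) (b a : D) (x : R) :
    Gmap coeff i t b (i a * x) = i a * Gmap coeff i t b x := by
  induction x using hR.induction_on with
  | zero => rw [mul_zero, Gmap_zero, mul_zero]
  | add x y hx hy => rw [mul_add, Gmap_add, Gmap_add, hx, hy, mul_add]
  | monomial n c => rw [← mul_assoc, ← map_mul, hR.Gmap_monomial, hR.Gmap_monomial, map_mul,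
      mul_assoc]

lemma Gmap_t_mul (hR : IsDiffPolyRing δ i t coeff) {b : D} (hb : b ∈ CenterSet D) (x : R) :
    Gmap coeff i t b (t * x) = (t - i b) * Gmap coeff i t b x := by
  induction x using hR.induction_on with
  | zero => rw [mul_zero, Gmap_zero, mul_zero]
  | add x y hx hy => rw [mul_add, Gmap_add, Gmap_add, hx, hy, mul_add]
  | monomial n c =>
    rw [← mul_assoc, hR.1, add_mul, mul_assoc, ← pow_succ', Gmap_add, hR.Gmap_monomial,
      hR.Gmap_monomial, hR.Gmap_monomial, ← mul_assoc, hR.sub_C_mul_C hb, add_mul, mul_assoc,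
      ← pow_succ']

lemma Gmap_mul (hR : IsDiffPolyRing δ i t coeff) {b : D} (hb : b ∈ CenterSet D) (x y : R) :
    Gmap coeff i t b (x * y) = Gmap coeff i t b x * Gmap coeff i t b y := by
  induction x using hR.induction_on with
  | zero => rw [zero_mul, Gmap_zero, zero_mul]
  | add x x' hx hx' => rw [add_mul, Gmap_add, Gmap_add, hx, hx', add_mul]
  | monomial n c =>
    have h_t_pow : Gmap coeff i t b (t ^ n * y) = (t - i b) ^ n * Gmap coeff i t b y := by
      induction n with
      | zero => rw [pow_zero, one_mul, pow_zero, one_mul]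
      | succ n ih => rw [pow_succ', mul_assoc, hR.Gmap_t_mul hb, ih, pow_succ', mul_assoc]
    rw [mul_assoc, hR.Gmap_C_mul, h_t_pow, hR.Gmap_monomial, mul_assoc]

noncomputable def gmapRingHom (hR : IsDiffPolyRing δ i t coeff) {b : D}
    (hb : b ∈ CenterSet D) : R →+* R where
  toFun := Gmap coeff i t b
  map_one' := by simpa using hR.Gmap_monomial b 0 1
  map_mul' := hR.Gmap_mul hb
  map_zero' := Gmap_zero b
  map_add' := Gmap_add b

lemma gmapRingHom_C (hR : IsDiffPolyRing δ i t coeff) {b : D} (hb : b ∈ CenterSet D) (c : D) :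
    hR.gmapRingHom hb (i c) = i c := by
  change Gmap coeff i t b (i c) = i c
  simpa using hR.Gmap_monomial b 0 c

lemma gmapRingHom_t (hR : IsDiffPolyRing δ i t coeff) {b : D} (hb : b ∈ CenterSet D) :
    hR.gmapRingHom hb t = t - i b := by
  change Gmap coeff i t b t = t - i b
  simpa using hR.Gmap_monomial b 1 1

lemma Gmap_Gmap_neg (hR : IsDiffPolyRing δ i t coeff) {b : D} (hb : b ∈ CenterSet D) (x : R) :
    Gmap coeff i t b (Gmap coeff i t (-b) x) = x := by
  induction x using hR.induction_on with
  | zero => rw [Gmap_zero, Gmap_zero]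
  | add x y hx hy => rw [Gmap_add, Gmap_add, hx, hy]
  | monomial n c =>
    change hR.gmapRingHom hb (Gmap coeff i t (-b) (i c * t ^ n)) = _
    rw [hR.Gmap_monomial, map_mul, map_pow, map_sub, gmapRingHom_C, gmapRingHom_C, gmapRingHom_t,
      map_neg, sub_neg_eq_add, sub_add_cancel]

noncomputable def gmapEquiv (hR : IsDiffPolyRing δ i t coeff) {b : D} (hb : b ∈ CenterSet D) :
    R ≃+* R :=
  { hR.gmapRingHom hb with
    invFun := Gmap coeff i t (-b)
    left_inv := fun x => by
      change Gmap coeff i t (-b) (Gmap coeff i t b x) = x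
      simpa using hR.Gmap_Gmap_neg (neg_mem_centerSet hb) x
    right_inv := hR.Gmap_Gmap_neg hb }

lemma degLt_Gmap (hR : IsDiffPolyRing δ i t coeff) (b : D) {m : ℕ} {x : R}
    (hx : DegLt coeff m x) : DegLt coeff m (Gmap coeff i t b x) := by
  intro k hk
  rw [Gmap, substT, map_finsuppSum, Finsupp.sum_apply]
  refine Finset.sum_eq_zero fun n hn => ?_
  have hnm : n < m := not_le.mp fun h => Finsupp.mem_support_iff.mp hn (hx n h)
  dsimp only
  rw [hR.coeff_C_mul, hR.coeff_sub_C_pow_of_lt b (by omega), mul_zero]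

theorem isAlgIso_of_ringEquiv (hR : IsDiffPolyRing δ i t coeff) (hδ : IsDeriv δ)
    (Fset : Set D) {m : ℕ} (φ : R ≃+* R)
    (hφ : ∀ x, DegLt coeff m x → DegLt coeff m (φ x))
    (hφ_symm : ∀ x, DegLt coeff m x → DegLt coeff m (φ.symm x))
    (hφ_C : ∀ a, φ (i a) = i a) {f h : R} (hφf : φ f = h) (hh : MonicDeg coeff m h)
    {mulf mulh : R → R → R} (hmulf : IsPetitMul coeff f m mulf)
    (hmulh : IsPetitMul coeff h m mulh) :
    IsAlgIso Fset i (SfSet coeff m) (SfSet coeff m) mulf mulh φ := by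
  refine ⟨⟨fun x => hφ x, φ.injective.injOn, fun y hy => ⟨φ.symm y, hφ_symm y hy, by simp⟩⟩,
    fun x _ y _ => map_add φ x y, fun x _ y _ => ?_, map_one φ,
    fun a _ x _ => by rw [map_mul, hφ_C]⟩
  obtain ⟨hdegf, q, hq⟩ := hmulf x y
  obtain ⟨hdegh, q', hq'⟩ := hmulh (φ x) (φ y)
  refine hR.remainder_unique hδ hh (hφ _ hdegf) hdegh (q := φ q) (q' := q') ?_
  rw [← hq', ← map_mul, hq, map_add, map_mul, hφf]

lemma monicDeg_pPoly (hR : IsDiffPolyRing δ i t coeff) {p : ℕ} (hp : 1 < p)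
    {e : ℕ} (a : Fin e → D) (d : D) : MonicDeg coeff (p ^ e) (pPoly i t p a d) := by
  have hlower : ∀ k, p ^ e ≤ k →
      coeff (∑ j : Fin e, i (a j) * t ^ p ^ (e - 1 - (j : ℕ)) + i d) k = 0 := by
    intro k hk
    have hpos : 0 < p ^ e := Nat.pow_pos (by omega)
    rw [map_add, map_sum, Finsupp.add_apply, Finset.sum_apply', hR.coeff_C,
      Finsupp.single_eq_of_ne (by omega), add_zero]
    refine Finset.sum_eq_zero fun j _ => ?_
    have : p ^ (e - 1 - (j : ℕ)) < p ^ e := Nat.pow_lt_pow_right hp (by omega)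
    rw [hR.coeff_monomial, Finsupp.single_eq_of_ne (by omega)]
  refine ⟨?_, fun k hk => ?_⟩
  · rw [pPoly, add_assoc, map_add, Finsupp.add_apply, hlower _ le_rfl, add_zero, hR.coeff_t_pow,
      Finsupp.single_eq_same]
  · rw [pPoly, add_assoc, map_add, Finsupp.add_apply, hlower _ hk.le, add_zero, hR.coeff_t_pow,
      Finsupp.single_eq_of_ne hk.ne']

lemma monicDeg_sub_C (hR : IsDiffPolyRing δ i t coeff) {m : ℕ} (hm : 0 < m)
    {f : R} (hf : MonicDeg coeff m f) (c : D) : MonicDeg coeff m (f - i c) := by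
  refine ⟨?_, fun k hk => ?_⟩
  · rw [map_sub, Finsupp.sub_apply, hf.1, hR.coeff_C, Finsupp.single_eq_of_ne hm.ne', sub_zero]
  · rw [map_sub, Finsupp.sub_apply, hf.2 k hk, hR.coeff_C, Finsupp.single_eq_of_ne (by omega),
      sub_zero]

lemma gmapRingHom_pPoly (hR : IsDiffPolyRing δ i t coeff) {p : ℕ} (hp : p.Prime)
    [CharP D p] {b : D} (hb : b ∈ CenterSet D) {e : ℕ} (a : Fin e → D) (d : D) :
    ∃ c, hR.gmapRingHom hb (pPoly i t p a d) = pPoly i t p a d + i c := by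
  refine ⟨(fun x => δ x - b * x)^[p ^ e] 1 +
    ∑ j : Fin e, a j * (fun x => δ x - b * x)^[p ^ (e - 1 - (j : ℕ))] 1, ?_⟩
  simp only [pPoly, map_add, map_sum, map_mul, map_pow, hR.gmapRingHom_C, hR.gmapRingHom_t,
    hR.sub_C_pow_prime_pow hp, mul_add, Finset.sum_add_distrib]
  abel

lemma Gmap_eq_sub_Vf (hR : IsDiffPolyRing δ i t coeff) {f : R} {b c : D}
    (h : Gmap coeff i t b f = f + i c) : Gmap coeff i t b f = f - i (Vf coeff i t f b) := by
  have hVf : Vf coeff i t f b = -c := by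
    change coeff (f - Gmap coeff i t b f) 0 = -c
    rw [h, sub_add_cancel_left, ← map_neg, hR.coeff_C, Finsupp.single_eq_same]
  rw [hVf, map_neg, sub_neg_eq_add, h]

theorem isAlgIso_Gmap_pPoly (hR : IsDiffPolyRing δ i t coeff) (hδ : IsDeriv δ)
    {p : ℕ} (hp : p.Prime) [CharP D p] (Fset : Set D) {b : D} (hb : b ∈ CenterSet D) {e : ℕ}
    (a : Fin e → D) (d : D) {mulf mulh : R → R → R}
    (hmulf : IsPetitMul coeff (pPoly i t p a d) (p ^ e) mulf)
    (hmulh : IsPetitMul coeff (pPoly i t p a d - i (Vf coeff i t (pPoly i t p a d) b)) (p ^ e)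
      mulh) :
    IsAlgIso Fset i (SfSet coeff (p ^ e)) (SfSet coeff (p ^ e)) mulf mulh (Gmap coeff i t b) := by
  obtain ⟨c, hc⟩ := hR.gmapRingHom_pPoly hp hb a d
  exact hR.isAlgIso_of_ringEquiv hδ Fset (hR.gmapEquiv hb) (fun _ => hR.degLt_Gmap b)
    (fun _ => hR.degLt_Gmap (-b)) (hR.gmapRingHom_C hb) (hR.Gmap_eq_sub_Vf hc)
    (hR.monicDeg_sub_C (Nat.pow_pos hp.pos) (hR.monicDeg_pPoly hp.one_lt a d) _) hmulf hmulh

end IsDiffPolyRing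

end

theorem stmt_5_general {D R : Type*} [DivisionRing D] [Ring R]
    (p : ℕ) (hp : p.Prime) [CharP D p] (e : ℕ)
    (δ : D → D) (hδ : IsDeriv δ)
    (i : D →+* R) (t : R) (coeff : R ≃+ (ℕ →₀ D))
    (hR : IsDiffPolyRing δ i t coeff)
    (a : Fin e → D) (d : D) (f : R)
    (hfdef : f = t ^ p ^ e + (∑ j : Fin e, i (a j) * t ^ p ^ (e - 1 - (j : ℕ))) + i d)
    (mulS : R → R → R) (hmulS : IsPetitMul coeff f (p ^ e) mulS) :
    -- (i)
    (∀ a' ∈ CenterSet D, ∀ mulS' : R → R → R,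
      IsPetitMul coeff (f - i (Vf coeff i t f a')) (p ^ e) mulS' →
      ∃ H : R → R,
        IsAlgIso (F0Set δ) i (SfSet coeff (p ^ e)) (SfSet coeff (p ^ e)) mulS mulS' H) ∧
    -- (ii)
    ∀ a' ∈ CenterSet D, Vf coeff i t f a' = 0 →
      IsAut (F0Set δ) i (SfSet coeff (p ^ e)) mulS (Gmap coeff i t a') := by
  obtain rfl : f = pPoly i t p a d := hfdef
  refine ⟨fun a' ha' mulS' hmulS' =>
    ⟨_, hR.isAlgIso_Gmap_pPoly hδ hp _ ha' a d hmulS hmulS'⟩, fun a' ha' hV => ?_⟩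
  exact hR.isAlgIso_Gmap_pPoly hδ hp _ ha' a d hmulS (by rwa [hV, map_zero, sub_zero])

/-- for a monic `p`-polynomial
`f(t) = t^{p^e} + a₁t^{p^{e−1}} + ⋯ + a_e t + d ∈ D[t;δ]` of degree `p^e ≥ 2`:
(i) `S_f ≅ S_h` as `F`-algebras for `h(t) = f(t) − V_f(a)`, for every `a ∈ C`;
(ii) for every `a ∈ C` with `V_f(a) = 0`, the map `G_{id,−a}` is an `F`-algebra
automorphism of `S_f`. -/
theorem stmt_5 {D R : Type*} [DivisionRing D] [Ring R]
    (p : ℕ) (hp : p.Prime) [CharP D p] (e : ℕ) (he : 1 ≤ e)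
    (n e0 : ℕ) (hn : HasDimIn (CenterSet D) Set.univ (n ^ 2))
    (δ : D → D) (hδ : IsDeriv δ) (hδ0 : δ ≠ 0)
    (c0 : Fin e0 → D) (hmin : IsMinPPoly δ (CenterSet D) (F0Set δ) p e0 c0)
    (i : D →+* R) (t : R) (coeff : R ≃+ (ℕ →₀ D))
    (hR : IsDiffPolyRing δ i t coeff)
    (a : Fin e → D) (d : D) (f : R)
    (hfdef : f = t ^ p ^ e + (∑ j : Fin e, i (a j) * t ^ p ^ (e - 1 - (j : ℕ))) + i d)
    (mulS : R → R → R) (hmulS : IsPetitMul coeff f (p ^ e) mulS) :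
    -- (i)
    (∀ a' ∈ CenterSet D, ∀ mulS' : R → R → R,
      IsPetitMul coeff (f - i (Vf coeff i t f a')) (p ^ e) mulS' →
      ∃ H : R → R,
        IsAlgIso (F0Set δ) i (SfSet coeff (p ^ e)) (SfSet coeff (p ^ e)) mulS mulS' H) ∧
    -- (ii)
    ∀ a' ∈ CenterSet D, Vf coeff i t f a' = 0 →
      IsAut (F0Set δ) i (SfSet coeff (p ^ e)) mulS (Gmap coeff i t a') :=
  stmt_5_general p hp e δ hδ i t coeff hR a d f hfdef mulS hmulS
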